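/- The outcome of the domain-reduction algorithm is a maximal element (with respect to the componentwise order) of the set of maximizers of f over the box {ζ ∈ Ξ⁰ : ζ ≤ b}. -/

import Mathlib

/-- `chi j` is the unit vector at `j` for `j = some i`, and the zero vector for `j = none`. -/
def chi {I : Type*} [DecidableEq I] : Option I → I → ℤ
  | none => fun _ => 0
  | some i => fun k => if k = i then 1 else 0

/-- Unit vector at coordinate `i`. -/
def unitv {I : Type*} [DecidableEq I] (i : I) : I → ℤ := fun k => if k = i then 1 else 0

/-- `f` is ordinally concave on the domain `Ξ`. -/
def OrdinallyConcave {I : Type*} [DecidableEq I] (Ξ : Set (I → ℤ)) (f : (I → ℤ) → ℝ) : Prop :=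
  ∀ ξ ∈ Ξ, ∀ ξ' ∈ Ξ, ∀ i : I, ξ' i < ξ i →
    ∃ j : Option I, (∀ k, j = some k → ξ k < ξ' k) ∧
      ξ - chi (some i) + chi j ∈ Ξ ∧ ξ' + chi (some i) - chi j ∈ Ξ ∧
      (f ξ < f (ξ - chi (some i) + chi j) ∨
        f ξ' < f (ξ' + chi (some i) - chi j) ∨
        (f (ξ' + chi (some i) - chi j) = f ξ' ∧ f (ξ - chi (some i) + chi j) = f ξ))

/-- The states reachable by the domain-reduction algorithm for maximizing `f` over the
box `{ζ ∈ Ξ : ζ ≤ b}`: starting from `0`, repeatedly add a best unit increment as long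
as this weakly increases `f`. -/
inductive Reach {I : Type*} [DecidableEq I] (Ξ : Set (I → ℤ)) (f : (I → ℤ) → ℝ)
    (b : I → ℤ) : (I → ℤ) → Prop
  | zero : Reach Ξ f b 0
  | step (ξ : I → ℤ) (i : I) :
      Reach Ξ f b ξ →
      ξ + unitv i ∈ Ξ → ξ + unitv i ≤ b →
      f ξ ≤ f (ξ + unitv i) →
      (∀ i' : I, ξ + unitv i' ∈ Ξ → ξ + unitv i' ≤ b → f (ξ + unitv i') ≤ f (ξ + unitv i)) →
      Reach Ξ f b (ξ + unitv i)

/-!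
Greedy ascent never loses a maximizer above it: every state reached by the algorithm lies
below some maximizer of `f` on the box. When the greedy step at coordinate `i` passes the
maximizer `ζ` in that coordinate, ordinal concavity applied to `ξ + χᵢ` and `ζ` exchanges
`χᵢ` against some `χⱼ`; both strict alternatives contradict the greedy choice of `i` or the
optimality of `ζ`, so the exchanged point `ζ + χᵢ - χⱼ` is again a maximizer, and it lies
above `ξ + χᵢ`. At termination the same exchange, applied to `ξ` and a maximizer `ζ ≥ ξ`,
shows that `ζ = ξ`.
-/

def IsBoxMaximizer {I : Type*} (Ξ : Set (I → ℤ)) (f : (I → ℤ) → ℝ) (b ζ : I → ℤ) : Prop :=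
  ζ ∈ Ξ ∧ ζ ≤ b ∧ ∀ η ∈ Ξ, η ≤ b → f η ≤ f ζ

theorem exists_isBoxMaximizer {I : Type*} {Ξ : Set (I → ℤ)} {b : I → ℤ} (f : (I → ℤ) → ℝ)
    (hfin : Ξ.Finite) (h0 : 0 ∈ Ξ) (hb : 0 ≤ b) :
    ∃ ζ, IsBoxMaximizer Ξ f b ζ := by
  obtain ⟨ζ, ⟨hζΞ, hζb⟩, hmax⟩ :=
    Set.exists_max_image {ζ | ζ ∈ Ξ ∧ ζ ≤ b} f (hfin.subset fun _ h => h.1) ⟨0, h0, hb⟩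
  exact ⟨ζ, hζΞ, hζb, fun η hη hηb => hmax η ⟨hη, hηb⟩⟩

section

variable {I : Type*} [DecidableEq I]

@[simp]
lemma chi_some (i : I) : chi (some i) = unitv i := rfl

@[simp]
lemma chi_none : chi (none : Option I) = 0 := rfl

@[simp]
lemma unitv_self (i : I) : unitv i i = 1 := if_pos rfl

lemma unitv_nonneg (i : I) : 0 ≤ unitv i := fun k => by
  simp only [unitv, Pi.zero_apply]
  split_ifs <;> omega

lemma chi_nonneg (j : Option I) : 0 ≤ chi j := by
  cases j with
  | none => exact le_rfl
  | some i => exact unitv_nonneg i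

lemma add_unitv_le_of_lt {x y : I → ℤ} {i : I} (hxy : x ≤ y) (hi : x i < y i) :
    x + unitv i ≤ y := fun k => by
  simp only [Pi.add_apply, unitv]
  split_ifs with hk
  · subst hk; omega
  · simpa using hxy k

lemma add_chi_le {x y : I → ℤ} {j : Option I} (hxy : x ≤ y)
    (hj : ∀ k, j = some k → x k < y k) : x + chi j ≤ y := by
  cases j with
  | none => simpa using hxy
  | some k => exact add_unitv_le_of_lt hxy (hj k rfl)

variable {Ξ : Set (I → ℤ)} {f : (I → ℤ) → ℝ} {b : I → ℤ}

theorem exists_isBoxMaximizer_add_unitv_le (hf : OrdinallyConcave Ξ f) {ξ ζ : I → ℤ} {i : I}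
    (hζ : IsBoxMaximizer Ξ f b ζ) (hξζ : ξ ≤ ζ)
    (hmem : ξ + unitv i ∈ Ξ) (hle : ξ + unitv i ≤ b) (hinc : f ξ ≤ f (ξ + unitv i))
    (hbest : ∀ k, ξ + unitv k ∈ Ξ → ξ + unitv k ≤ b → f (ξ + unitv k) ≤ f (ξ + unitv i)) :
    ∃ ζ', IsBoxMaximizer Ξ f b ζ' ∧ ξ + unitv i ≤ ζ' := by
  obtain ⟨hζΞ, hζb, hζmax⟩ := hζ
  by_cases hlt : ξ i < ζ i
  · exact ⟨ζ, ⟨hζΞ, hζb, hζmax⟩, add_unitv_le_of_lt hξζ hlt⟩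
  have hξi : ξ i + 1 ≤ b i := by simpa using hle i
  have hζi : ζ i < (ξ + unitv i) i := by simp only [Pi.add_apply, unitv_self]; omega
  obtain ⟨j, hj, hmem₁, hmem₂, hcases⟩ := hf _ hmem ζ hζΞ i hζi
  rw [chi_some, add_sub_cancel_right] at hmem₁ hcases
  have hξj : ξ + chi j ≤ ζ := add_chi_le hξζ fun k hk =>
    (le_add_of_nonneg_right (unitv_nonneg i k)).trans_lt (hj k hk)
  have hζ'b : ζ + unitv i - chi j ≤ b :=
    (sub_le_self _ (chi_nonneg j)).trans (add_unitv_le_of_lt hζb (by omega))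
  rcases hcases with hgt | hgt | ⟨heq, -⟩
  · exfalso
    cases j with
    | none => simp only [chi_none, add_zero] at hgt; linarith
    | some k =>
      rw [chi_some] at hgt hξj hmem₁
      exact (hbest k hmem₁ (hξj.trans hζb)).not_gt hgt
  · exact absurd (hζmax _ hmem₂ hζ'b) hgt.not_ge
  · refine ⟨_, ⟨hmem₂, hζ'b, fun η hη hηb => heq ▸ hζmax η hη hηb⟩, ?_⟩
    rw [le_sub_iff_add_le, add_right_comm]
    exact add_le_add hξj le_rfl

theorem Reach.exists_isBoxMaximizer_le (hf : OrdinallyConcave Ξ f)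
    (h₀ : ∃ ζ, IsBoxMaximizer Ξ f b ζ ∧ 0 ≤ ζ) {ξ : I → ℤ} (hr : Reach Ξ f b ξ) :
    ∃ ζ, IsBoxMaximizer Ξ f b ζ ∧ ξ ≤ ζ := by
  induction hr with
  | zero => exact h₀
  | step ξ i _ hmem hle hinc hbest ih =>
    obtain ⟨ζ, hζ, hξζ⟩ := ih
    exact exists_isBoxMaximizer_add_unitv_le hf hζ hξζ hmem hle hinc hbest

theorem Reach.mem (h0 : 0 ∈ Ξ) {ξ : I → ℤ} (hr : Reach Ξ f b ξ) : ξ ∈ Ξ := by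
  cases hr with
  | zero => exact h0
  | step _ _ _ hmem => exact hmem

theorem eq_of_isBoxMaximizer_of_le (hf : OrdinallyConcave Ξ f) {ξ ζ : I → ℤ} (hξ : ξ ∈ Ξ)
    (hterm : ∀ i, ξ + unitv i ∈ Ξ → ξ + unitv i ≤ b → f (ξ + unitv i) < f ξ)
    (hζ : IsBoxMaximizer Ξ f b ζ) (hξζ : ξ ≤ ζ) : ζ = ξ := by
  obtain ⟨hζΞ, hζb, hζmax⟩ := hζ
  by_contra hne
  obtain ⟨i, hi⟩ : ∃ i, ξ i < ζ i := by
    by_contra! h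
    exact hne (le_antisymm h hξζ)
  obtain ⟨j, hj, hmem₁, hmem₂, hcases⟩ := hf ζ hζΞ ξ hξ i hi
  obtain rfl : j = none := by
    cases j with
    | none => rfl
    | some k => exact absurd (hj k rfl) (hξζ k).not_gt
  simp only [chi_none, chi_some, add_zero, sub_zero] at hmem₁ hmem₂ hcases
  have hξi := hterm i hmem₂ ((add_unitv_le_of_lt hξζ hi).trans hζb)
  rcases hcases with hgt | hgt | ⟨heq, -⟩
  · exact (hζmax _ hmem₁ ((sub_le_self _ (unitv_nonneg i)).trans hζb)).not_gt hgt
  · linarith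
  · linarith

end

theorem domain_reduction_maximal_maximizer_general {I : Type*} [DecidableEq I]
    (Ξ : Set (I → ℤ)) (hfin : Ξ.Finite) (h0 : (0 : I → ℤ) ∈ Ξ)
    (hpos : ∀ ξ ∈ Ξ, ∀ i, 0 ≤ ξ i)
    (f : (I → ℤ) → ℝ) (hf : OrdinallyConcave Ξ f)
    (b : I → ℤ) (hb : ∀ i, 0 ≤ b i)
    (ξ : I → ℤ) (hreach : Reach Ξ f b ξ)
    (hterm : ∀ i : I, ξ + unitv i ∈ Ξ → ξ + unitv i ≤ b → f (ξ + unitv i) < f ξ) :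
    ξ ∈ Ξ ∧ ξ ≤ b ∧ (∀ ζ ∈ Ξ, ζ ≤ b → f ζ ≤ f ξ) ∧
      ∀ ζ ∈ Ξ, ζ ≤ b → (∀ η ∈ Ξ, η ≤ b → f η ≤ f ζ) → ξ ≤ ζ → ζ = ξ := by
  obtain ⟨ζ₀, hζ₀⟩ := exists_isBoxMaximizer f hfin h0 hb
  obtain ⟨ζ, hζ, hξζ⟩ :=
    hreach.exists_isBoxMaximizer_le hf ⟨ζ₀, hζ₀, hpos ζ₀ hζ₀.1⟩
  have hξ := hreach.mem h0
  obtain rfl := eq_of_isBoxMaximizer_of_le hf hξ hterm hζ hξζ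
  exact ⟨hξ, hζ.2.1, hζ.2.2, fun ζ' hζ'Ξ hζ'b hζ'max hle =>
    eq_of_isBoxMaximizer_of_le hf hξ hterm ⟨hζ'Ξ, hζ'b, hζ'max⟩ hle⟩

/-- the outcome of the domain-reduction algorithm (a reached state at
which no further unit increment weakly increases `f`) is a maximal element, with
respect to the componentwise order, of the set of maximizers of `f` over the box
`{ζ ∈ Ξ : ζ ≤ b}`. -/
theorem domain_reduction_maximal_maximizer {I : Type*} [Fintype I] [DecidableEq I]
    (Ξ : Set (I → ℤ)) (hfin : Ξ.Finite) (h0 : (0 : I → ℤ) ∈ Ξ)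
    (hpos : ∀ ξ ∈ Ξ, ∀ i, 0 ≤ ξ i)
    (f : (I → ℤ) → ℝ) (hfnn : ∀ ξ ∈ Ξ, 0 ≤ f ξ) (hf : OrdinallyConcave Ξ f)
    (b : I → ℤ) (hb : ∀ i, 0 ≤ b i)
    (ξ : I → ℤ) (hreach : Reach Ξ f b ξ)
    (hterm : ∀ i : I, ξ + unitv i ∈ Ξ → ξ + unitv i ≤ b → f (ξ + unitv i) < f ξ) :
    ξ ∈ Ξ ∧ ξ ≤ b ∧ (∀ ζ ∈ Ξ, ζ ≤ b → f ζ ≤ f ξ) ∧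
      ∀ ζ ∈ Ξ, ζ ≤ b → (∀ η ∈ Ξ, η ≤ b → f η ≤ f ζ) → ξ ≤ ζ → ζ = ξ :=
  domain_reduction_maximal_maximizer_general Ξ hfin h0 hpos f hf b hb ξ hreach hterm
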